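/- arXiv:1208.3791 — 3 statements merged into one kernel-verified Lean document; each statement's English description precedes it below -/
import Mathlib

section
/- Fix 0 < α < 1, C > 0, and β ≥ max{1, 6/(C·α·(1−α))}. Define p(x) = C·x^α − β·ln(1+x) for x ≥ 0 and q(x) = p(x)/x for x > 0. Then p is monotone increasing and q is monotone decreasing on the interval [K, ∞), where K = (β²/(C·α·(1−α)))^(1/α). -/
open Real Set

/-! With `D = C α (1 - α)` the threshold satisfies `K ^ α = β² / D`. The derivative
`p' x = C α x ^ (α - 1) - β / (1 + x)` is nonnegative as soon as `β ≤ C α x ^ α`, which holds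
from `K` on. The sign of `q'` is that of `x p' x - p x ≤ β log (1 + x) - C (1 - α) x ^ α`; the
function `C (1 - α) x ^ α - β log (1 + x)` is increasing from `K` on by the same criterion, and
nonnegative at `K` because `α log (1 + K) ≤ β`. For the latter, `β D ≥ 6` gives
`K ^ α ≤ β³ / 6`, so `α log (1 + K) ≤ log (1 + K ^ α) ≤ log (1 + β³ / 6) ≤ β`. -/

lemma one_add_cube_div_six_le_exp {x : ℝ} (hx : 0 ≤ x) : 1 + x ^ 3 / 6 ≤ exp x := by
  have h := sum_le_exp_of_nonneg hx 4
  norm_num [Finset.sum_range_succ, Nat.factorial] at h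
  nlinarith [sq_nonneg x]

lemma mul_log_one_add_le {α β K : ℝ} (hα0 : 0 < α) (hα1 : α ≤ 1) (hK : 0 ≤ K) (hβ : 0 ≤ β)
    (hKβ : K ^ α ≤ β ^ 3 / 6) : α * log (1 + K) ≤ β := by
  have hsub : (1 + K) ^ α ≤ 1 + K ^ α := by
    simpa using rpow_add_le_add_rpow zero_le_one hK hα0.le hα1
  calc α * log (1 + K) = log ((1 + K) ^ α) := (log_rpow (by positivity) α).symm
    _ ≤ β := by
      rw [log_le_iff_le_exp (by positivity)]
      linarith [one_add_cube_div_six_le_exp hβ]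

lemma hasDerivAt_mul_rpow_sub_mul_log (c α β : ℝ) {x : ℝ} (hx : 0 < x) :
    HasDerivAt (fun y => c * y ^ α - β * log (1 + y)) (c * α * x ^ (α - 1) - β / (1 + x)) x := by
  have hrpow : HasDerivAt (fun y => y ^ α) (α * x ^ (α - 1)) x :=
    hasDerivAt_rpow_const (Or.inl hx.ne')
  have hlog : HasDerivAt (fun y => log (1 + y)) (1 / (1 + x)) x :=
    ((hasDerivAt_id x).const_add 1).log (by positivity)
  rw [show c * α * x ^ (α - 1) - β / (1 + x) = c * (α * x ^ (α - 1)) - β * (1 / (1 + x)) by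
    ring]
  exact (hrpow.const_mul c).sub (hlog.const_mul β)

lemma monotoneOn_mul_rpow_sub_mul_log {c α β K : ℝ} (hc : 0 ≤ c) (hα : 0 < α) (hK : 0 < K)
    (hβ : β ≤ c * α * K ^ α) :
    MonotoneOn (fun x => c * x ^ α - β * log (1 + x)) (Ici K) := by
  have hderiv (x : ℝ) (hx : K ≤ x) := hasDerivAt_mul_rpow_sub_mul_log c α β (hK.trans_le hx)
  refine monotoneOn_of_hasDerivWithinAt_nonneg (convex_Ici K)
    (fun x hx => (hderiv x hx).continuousAt.continuousWithinAt)
    (fun x hx => (hderiv x (interior_subset hx)).hasDerivWithinAt) fun x hx => ?_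
  rw [interior_Ici, mem_Ioi] at hx
  have hx0 : 0 < x := hK.trans hx
  have hA : β ≤ c * α * x ^ α := hβ.trans (by gcongr)
  have hA0 : 0 ≤ c * α * x ^ α := by positivity
  rw [sub_nonneg]
  calc β / (1 + x) ≤ c * α * x ^ α / (1 + x) := by gcongr
    _ ≤ c * α * x ^ α / x := by gcongr; linarith
    _ = c * α * x ^ (α - 1) := by rw [rpow_sub_one hx0.ne', mul_div_assoc]

lemma mul_log_one_add_le_mul_rpow {c α β K x : ℝ} (hc : 0 ≤ c) (hα : 0 < α) (hK : 0 < K)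
    (hβ : β ≤ c * α * K ^ α) (hK' : β * log (1 + K) ≤ c * K ^ α) (hx : K ≤ x) :
    β * log (1 + x) ≤ c * x ^ α := by
  have := monotoneOn_mul_rpow_sub_mul_log hc hα hK hβ self_mem_Ici hx hx
  dsimp only at this
  linarith

lemma antitoneOn_div_self_of_mul_le {f f' : ℝ → ℝ} {K : ℝ} (hK : 0 < K)
    (hf : ∀ x ∈ Ici K, HasDerivAt f (f' x) x) (hle : ∀ x ∈ Ioi K, x * f' x ≤ f x) :
    AntitoneOn (fun x => f x / x) (Ici K) := by
  have hderiv (x : ℝ) (hx : x ∈ Ici K) :=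
    (hf x hx).div (hasDerivAt_id x) (hK.trans_le hx).ne'
  refine antitoneOn_of_hasDerivWithinAt_nonpos (convex_Ici K)
    (fun x hx => (hderiv x hx).continuousAt.continuousWithinAt)
    (fun x hx => (hderiv x (interior_subset hx)).hasDerivWithinAt) fun x hx => ?_
  rw [interior_Ici] at hx
  apply div_nonpos_of_nonpos_of_nonneg _ (sq_nonneg _)
  simp only [id, mul_one]
  linarith [hle x hx, mul_comm x (f' x)]

lemma mul_deriv_le_mul_rpow_sub_mul_log {c α β x : ℝ} (hβ : 0 ≤ β) (hx : 0 < x)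
    (h : β * log (1 + x) ≤ c * (1 - α) * x ^ α) :
    x * (c * α * x ^ (α - 1) - β / (1 + x)) ≤ c * x ^ α - β * log (1 + x) := by
  have hpow : x * x ^ (α - 1) = x ^ α := by
    rw [rpow_sub_one hx.ne']
    field_simp
  have hfrac : 0 ≤ x * (β / (1 + x)) := by positivity
  linear_combination h + hfrac + (c * α) * hpow

theorem stmt_4 (α C β : ℝ) (hα0 : 0 < α) (hα1 : α < 1) (hC : 0 < C)
    (hβ : max 1 (6 / (C * α * (1 - α))) ≤ β)
    (p q : ℝ → ℝ)
    (hp : ∀ x, p x = C * x ^ α - β * Real.log (1 + x))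
    (hq : ∀ x, q x = p x / x)
    (K : ℝ) (hK : K = (β ^ 2 / (C * α * (1 - α))) ^ (1 / α)) :
    MonotoneOn p (Set.Ici K) ∧ AntitoneOn q (Set.Ici K) := by
  obtain rfl : p = fun x => C * x ^ α - β * log (1 + x) := funext hp
  obtain rfl : q = fun x => (C * x ^ α - β * log (1 + x)) / x := funext hq
  have h1α : 0 < 1 - α := sub_pos.2 hα1
  have hD : 0 < C * α * (1 - α) := by positivity
  have hβ1 : 1 ≤ β := le_of_max_le_left hβ
  have hβ0 : 0 ≤ β := zero_le_one.trans hβ1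
  have hβD : 6 ≤ β * (C * α * (1 - α)) := (div_le_iff₀ hD).1 (le_of_max_le_right hβ)
  have hK0 : 0 < K := hK ▸ by positivity
  have hKα : K ^ α = β ^ 2 / (C * α * (1 - α)) := by
    rw [hK, ← rpow_mul (by positivity), one_div_mul_cancel hα0.ne', rpow_one]
  have hCK : C * (1 - α) * K ^ α = β ^ 2 / α := by
    rw [hKα]
    field_simp
  have hlogK : β * log (1 + K) ≤ C * (1 - α) * K ^ α := by
    have := mul_log_one_add_le hα0 hα1.le hK0.le hβ0 <| by
      rw [hKα, div_le_div_iff₀ hD (by norm_num)]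
      nlinarith
    rw [hCK, le_div_iff₀ hα0]
    nlinarith
  refine ⟨monotoneOn_mul_rpow_sub_mul_log hC.le hα0 hK0 ?_,
    antitoneOn_div_self_of_mul_le hK0
      (fun x hx => hasDerivAt_mul_rpow_sub_mul_log C α β (hK0.trans_le hx))
      fun x hx => mul_deriv_le_mul_rpow_sub_mul_log hβ0 (hK0.trans hx)
        (mul_log_one_add_le_mul_rpow (by positivity) hα0 hK0 ?_ hlogK hx.le)⟩
  · rw [hKα, mul_div_assoc', le_div_iff₀ hD]
    nlinarith [mul_pos hC hα0]
  · rw [mul_right_comm, hCK, div_mul_cancel₀ _ hα0.ne']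
    nlinarith
end

section
/- Fix 0 < α < 1, C > 0, β ≥ max{1, 6/(C·α·(1−α))}, and let p(x) = C·x^α − β·ln(1+x), q(x) = p(x)/x, K = (β²/(Cα(1−α)))^(1/α). Let G be a group with a subadditive symmetric length function τ : G → ℕ (τ(xy) ≤ τ(x)+τ(y), τ(x⁻¹)=τ(x), τ(e)=0), and define ω(x) = exp(p(τ(x))). If x, y ∈ G satisfy min{τ(x), τ(y), τ(xy)} > K, then ω(xy) ≤ ω(x)·ω(y). -/
/-!
Write `p = weightExponent C α β`. Since `τ(xy) ≤ τ x + τ y` and `p` is increasing on `[K, ∞)`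
(there `p'(x) ≥ 0` because `C α x^α ≥ β`), it suffices that `p (a + b) ≤ p a + p b` for
`K < a ≤ b`. Concavity of `x ↦ x^α` gives `(a + b)^α ≤ b^α + α a^α`, which reduces this to
`β log (1 + a) ≤ C (1 - α) a^α`; the latter is an elementary logarithm estimate once
`C α (1 - α) a^α ≥ β²` and `C α (1 - α) β ≥ 6`.
-/

open Real

theorem log_le_div_add_log_sub_one {u c : ℝ} (hu : 0 < u) (hc : 0 < c) :
    log u ≤ u / c + log c - 1 := by
  have h := log_le_sub_one_of_pos (div_pos hu hc)
  rw [log_div hu.ne' hc.ne'] at h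
  linarith

theorem mul_log_two_mul_le {β D u : ℝ} (hD : 0 < D) (hβ : 1 ≤ β) (hDβ : 6 ≤ D * β)
    (hu : β ^ 2 ≤ D * u) : β * log (2 * u) ≤ D * u := by
  have hβ0 : 0 < β := by linarith
  have hu0 : 0 < u := pos_of_mul_pos_right ((by positivity : 0 < β ^ 2).trans_le hu) hD.le
  -- tangent lines of `log` at `2β/D` and at `4`; what is left is `5 log 2 - log 3 < 3`
  have hlog_u := log_le_div_add_log_sub_one hu0 (by positivity : 0 < 2 * β / D)
  have hlog_β := log_le_div_add_log_sub_one hβ0 (by norm_num : (0 : ℝ) < 4)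
  have hc : log (2 * β / D) ≤ 2 * log β - log 3 := by
    have h : 2 * β / D ≤ β ^ 2 / 3 := by
      rw [div_le_div_iff₀ hD (by norm_num)]
      nlinarith
    rw [← log_rpow hβ0, ← log_div (by positivity) (by norm_num)]
    exact log_le_log (by positivity) (by simpa using h)
  have h4 : log 4 = 2 * log 2 := by
    rw [show (4 : ℝ) = 2 ^ 2 by norm_num, log_pow, Nat.cast_ofNat]
  have h2 := log_two_lt_d9
  have h3 : 1 ≤ log 3 := by
    rw [le_log_iff_exp_le (by norm_num)]
    linarith [exp_one_lt_d9]
  have hdiv : β * (u / (2 * β / D)) = D * u / 2 := by field_simp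
  rw [log_mul two_ne_zero hu0.ne']
  nlinarith

theorem mul_log_one_add_le_s7 {α C β a : ℝ} (hα0 : 0 < α) (hα1 : α < 1) (hC : 0 < C)
    (hβ : 1 ≤ β) (hβ6 : 6 ≤ C * α * (1 - α) * β) (ha : 1 ≤ a)
    (hau : β ^ 2 ≤ C * α * (1 - α) * a ^ α) :
    β * log (1 + a) ≤ C * (1 - α) * a ^ α := by
  have ha0 : 0 < a := by linarith
  have hD : 0 < C * α * (1 - α) := by have := sub_pos.2 hα1; positivity
  have hlog : α * log (1 + a) ≤ log (2 * a ^ α) := by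
    have h2a : log (1 + a) ≤ log 2 + log a := by
      rw [← log_mul two_ne_zero ha0.ne']
      exact log_le_log (by positivity) (by linarith)
    have hα2 : α * log 2 ≤ log 2 := mul_le_of_le_one_left (log_nonneg one_le_two) hα1.le
    rw [log_mul two_ne_zero (by positivity), log_rpow ha0]
    linarith [mul_le_mul_of_nonneg_left h2a hα0.le]
  refine le_of_mul_le_mul_left ?_ hα0
  calc α * (β * log (1 + a)) = β * (α * log (1 + a)) := by ring
    _ ≤ β * log (2 * a ^ α) := by gcongr
    _ ≤ C * α * (1 - α) * a ^ α := mul_log_two_mul_le hD hβ hβ6 hau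
    _ = α * (C * (1 - α) * a ^ α) := by ring

theorem rpow_add_le_rpow_add_mul_rpow {α a b : ℝ} (hα0 : 0 ≤ α) (hα1 : α ≤ 1) (ha : 0 < a)
    (hab : a ≤ b) : (a + b) ^ α ≤ b ^ α + α * a ^ α := by
  have hb : 0 < b := ha.trans_le hab
  calc (a + b) ^ α = b ^ α * (1 + a / b) ^ α := by
        rw [← mul_rpow hb.le (by positivity), mul_add, mul_div_cancel₀ _ hb.ne', mul_one, add_comm]
    _ ≤ b ^ α * (1 + α * (a / b)) := by
        gcongr
        exact rpow_one_add_le_one_add_mul_self (by linarith [div_nonneg ha.le hb.le]) hα0 hα1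
    _ = b ^ α + α * (a * b ^ (α - 1)) := by rw [rpow_sub_one hb.ne']; field_simp
    _ ≤ b ^ α + α * (a * a ^ (α - 1)) := by
        gcongr b ^ α + α * (a * ?_)
        exact rpow_le_rpow_of_nonpos ha hab (by linarith)
    _ = b ^ α + α * a ^ α := by rw [rpow_sub_one ha.ne']; field_simp

noncomputable def weightExponent (C α β x : ℝ) : ℝ := C * x ^ α - β * log (1 + x)

theorem hasDerivAt_weightExponent (C α β : ℝ) {x : ℝ} (hx : 0 < x) :
    HasDerivAt (weightExponent C α β) (C * (α * x ^ (α - 1)) - β * (1 + x)⁻¹) x := by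
  have hlog : HasDerivAt (fun y => log (1 + y)) (1 + x)⁻¹ x := by
    simpa using ((hasDerivAt_id x).const_add 1).log (by positivity)
  exact ((hasDerivAt_rpow_const (Or.inl hx.ne')).const_mul C).sub (hlog.const_mul β)

theorem monotoneOn_weightExponent {C α β K : ℝ} (hC : 0 ≤ C) (hα : 0 ≤ α) (hK : 0 < K)
    (hβ : β ≤ C * α * K ^ α) : MonotoneOn (weightExponent C α β) (Set.Ici K) := by
  refine monotoneOn_of_hasDerivWithinAt_nonneg (convex_Ici K)
    (fun x hx =>
      (hasDerivAt_weightExponent C α β (hK.trans_le hx)).continuousAt.continuousWithinAt)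
    (fun x hx => (hasDerivAt_weightExponent C α β (hK.trans ?_)).hasDerivWithinAt) ?_
  · simpa using hx
  intro x hx
  rw [interior_Ici] at hx
  have hx0 : 0 < x := hK.trans hx
  rw [sub_nonneg, ← div_eq_mul_inv, div_le_iff₀ (by positivity), ← mul_assoc]
  calc β ≤ C * α * x ^ α := hβ.trans (by gcongr; exact hx.le)
    _ = C * α * x ^ (α - 1) * x := by rw [rpow_sub_one hx0.ne']; field_simp
    _ ≤ C * α * x ^ (α - 1) * (1 + x) := by gcongr; linarith

theorem weightExponent_add_le_of_le {α C β a b : ℝ} (hα0 : 0 < α) (hα1 : α < 1) (hC : 0 < C)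
    (hβ : 1 ≤ β) (hβ6 : 6 ≤ C * α * (1 - α) * β) (ha : 1 ≤ a) (hab : a ≤ b)
    (hau : β ^ 2 ≤ C * α * (1 - α) * a ^ α) :
    weightExponent C α β (a + b) ≤ weightExponent C α β a + weightExponent C α β b := by
  have hpow := rpow_add_le_rpow_add_mul_rpow hα0.le hα1.le (by linarith) hab
  have hlog : log (1 + b) ≤ log (1 + (a + b)) := log_le_log (by linarith) (by linarith)
  have hkey := mul_log_one_add_le_s7 hα0 hα1 hC hβ hβ6 ha hau
  unfold weightExponent
  linarith [mul_le_mul_of_nonneg_left hpow hC.le,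
    mul_le_mul_of_nonneg_left hlog (by linarith : 0 ≤ β)]

theorem weightExponent_add_le {α C β a b : ℝ} (hα0 : 0 < α) (hα1 : α < 1) (hC : 0 < C)
    (hβ : 1 ≤ β) (hβ6 : 6 ≤ C * α * (1 - α) * β) (ha : 1 ≤ a) (hb : 1 ≤ b)
    (hau : β ^ 2 ≤ C * α * (1 - α) * a ^ α) (hbu : β ^ 2 ≤ C * α * (1 - α) * b ^ α) :
    weightExponent C α β (a + b) ≤ weightExponent C α β a + weightExponent C α β b := by
  rcases le_total a b with hab | hba
  · exact weightExponent_add_le_of_le hα0 hα1 hC hβ hβ6 ha hab hau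
  · rw [add_comm a, add_comm (weightExponent C α β a)]
    exact weightExponent_add_le_of_le hα0 hα1 hC hβ hβ6 hb hba hbu

theorem stmt_7_general (α C β : ℝ) (hα0 : 0 < α) (hα1 : α < 1) (hC : 0 < C)
    (hβ : max 1 (6 / (C * α * (1 - α))) ≤ β)
    (p : ℝ → ℝ)
    (hp : ∀ x, p x = C * x ^ α - β * Real.log (1 + x))
    (K : ℝ) (hK : K = (β ^ 2 / (C * α * (1 - α))) ^ (1 / α))
    {G : Type*} [Group G] (τ : G → ℕ)
    (hsub : ∀ x y, τ (x * y) ≤ τ x + τ y)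
    (ω : G → ℝ) (hω : ∀ x, ω x = Real.exp (p (τ x)))
    (x y : G) (hx : K < τ x) (hy : K < τ y) (hxy : K < τ (x * y)) :
    ω (x * y) ≤ ω x * ω y := by
  obtain ⟨hβ1, hβ6⟩ := max_le_iff.mp hβ
  have hD : 0 < C * α * (1 - α) := by have := sub_pos.2 hα1; positivity
  rw [div_le_iff₀ hD, mul_comm] at hβ6
  have hK0 : 0 < K := hK ▸ by positivity
  have hKα : β ^ 2 = C * α * (1 - α) * K ^ α := by
    rw [hK, ← rpow_mul (by positivity), one_div_mul_cancel hα0.ne', rpow_one,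
      mul_div_cancel₀ _ hD.ne']
  have hlarge : ∀ z, K < τ z → 1 ≤ (τ z : ℝ) ∧ β ^ 2 ≤ C * α * (1 - α) * (τ z : ℝ) ^ α := by
    intro z hz
    refine ⟨Nat.one_le_cast.mpr (Nat.one_le_iff_ne_zero.mpr ?_), hKα ▸ by gcongr⟩
    intro h
    rw [h, Nat.cast_zero] at hz
    linarith
  have hmono : β ≤ C * α * K ^ α := by
    have : 0 ≤ C * α * K ^ α := by positivity
    nlinarith
  have hp' : p = weightExponent C α β := funext hp
  rw [hω, hω, hω, ← exp_add, exp_le_exp, hp']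
  calc weightExponent C α β (τ (x * y)) ≤ weightExponent C α β (τ x + τ y) :=
        monotoneOn_weightExponent hC.le hα0.le hK0 hmono hxy.le
          (hx.le.trans (by simp)) (by exact_mod_cast hsub x y)
    _ ≤ _ := weightExponent_add_le hα0 hα1 hC hβ1 hβ6 (hlarge x hx).1 (hlarge y hy).1
          (hlarge x hx).2 (hlarge y hy).2

theorem stmt_7 (α C β : ℝ) (hα0 : 0 < α) (hα1 : α < 1) (hC : 0 < C)
    (hβ : max 1 (6 / (C * α * (1 - α))) ≤ β)
    (p q : ℝ → ℝ)
    (hp : ∀ x, p x = C * x ^ α - β * Real.log (1 + x))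
    (hq : ∀ x, q x = p x / x)
    (K : ℝ) (hK : K = (β ^ 2 / (C * α * (1 - α))) ^ (1 / α))
    {G : Type*} [Group G] (τ : G → ℕ)
    (hsub : ∀ x y, τ (x * y) ≤ τ x + τ y)
    (hsymm : ∀ x, τ x⁻¹ = τ x) (he : τ 1 = 0)
    (ω : G → ℝ) (hω : ∀ x, ω x = Real.exp (p (τ x)))
    (x y : G) (hx : K < τ x) (hy : K < τ y) (hxy : K < τ (x * y)) :
    ω (x * y) ≤ ω x * ω y :=
  stmt_7_general α C β hα0 hα1 hC hβ p hp K hK τ hsub ω hω x y hx hy hxy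
end

section
/- Let G be a group, ω : G → (0,∞) a weight (ω(xy) ≤ ω(x)ω(y)), and suppose there exist nonnegative functions u, v : G → [0,∞) with Σ_{x∈G} u(x)² < ∞ and Σ_{y∈G} v(y)² < ∞ such that ω(xy)/(ω(x)ω(y)) ≤ u(x) + v(y) for all x, y ∈ G. Then the function Ω(x,y) = ω(xy)/(ω(x)ω(y)) can be written as Ω = f₁ + f₂ where sup_y Σ_x |f₁(x,y)|² < ∞ and sup_x Σ_y |f₂(x,y)|² < ∞. -/
/-!
Split `Ω(x,y) ≤ u(x) + v(y)` proportionally: `f₁ = Ω·u(x)/(u(x)+v(y))` and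
`f₂ = Ω·v(y)/(u(x)+v(y))`. Since `0 ≤ Ω/(u(x)+v(y)) ≤ 1`, we get `|f₁(x,y)| ≤ u(x)` and
`|f₂(x,y)| ≤ v(y)`, so the column sums of `|f₁|²` are bounded by `∑ u²` and the row sums of
`|f₂|²` by `∑ v²`.
-/

lemma mul_div_add_add_mul_div_add {a b c : ℝ} (ha : 0 ≤ a) (hab : a ≤ b + c) :
    a = a * b / (b + c) + a * c / (b + c) := by
  rcases eq_or_ne (b + c) 0 with hbc | hbc
  · have : a = 0 := le_antisymm (hbc ▸ hab) ha
    simp [this]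
  · rw [← add_div, ← mul_add, mul_div_cancel_right₀ a hbc]

lemma abs_mul_div_add_le {a b c : ℝ} (ha : 0 ≤ a) (hab : a ≤ b + c) (hb : 0 ≤ b) :
    |a * b / (b + c)| ≤ b := by
  have hbc : 0 ≤ b + c := ha.trans hab
  rw [abs_of_nonneg (by positivity), mul_div_right_comm]
  exact mul_le_of_le_one_left hb (div_le_one_of_le₀ hab hbc)

lemma summable_sq_abs_and_tsum_le_of_abs_le {ι : Type*} {f g : ι → ℝ}
    (hfg : ∀ i, |f i| ≤ g i) (hg : Summable fun i => g i ^ 2) :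
    Summable (fun i => |f i| ^ 2) ∧ ∑' i, |f i| ^ 2 ≤ ∑' i, g i ^ 2 := by
  have hle : ∀ i, |f i| ^ 2 ≤ g i ^ 2 := fun i => pow_le_pow_left₀ (abs_nonneg _) (hfg i) 2
  have hf : Summable fun i => |f i| ^ 2 := hg.of_nonneg_of_le (fun _ => by positivity) hle
  exact ⟨hf, hf.tsum_le_tsum hle hg⟩

theorem exists_decomposition_of_le_add {α β : Type*} (Ω : α → β → ℝ) (u : α → ℝ) (v : β → ℝ)
    (hΩ0 : ∀ x y, 0 ≤ Ω x y) (hΩ : ∀ x y, Ω x y ≤ u x + v y)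
    (hu0 : ∀ x, 0 ≤ u x) (hv0 : ∀ y, 0 ≤ v y)
    (hu : Summable fun x => u x ^ 2) (hv : Summable fun y => v y ^ 2) :
    ∃ f₁ f₂ : α → β → ℝ, (∀ x y, Ω x y = f₁ x y + f₂ x y) ∧
      (∀ y, Summable (fun x => |f₁ x y| ^ 2) ∧ ∑' x, |f₁ x y| ^ 2 ≤ ∑' x, u x ^ 2) ∧
      (∀ x, Summable (fun y => |f₂ x y| ^ 2) ∧ ∑' y, |f₂ x y| ^ 2 ≤ ∑' y, v y ^ 2) := by
  refine ⟨fun x y => Ω x y * u x / (u x + v y), fun x y => Ω x y * v y / (u x + v y),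
    fun x y => mul_div_add_add_mul_div_add (hΩ0 x y) (hΩ x y), fun y => ?_, fun x => ?_⟩
  · exact summable_sq_abs_and_tsum_le_of_abs_le
      (fun x => abs_mul_div_add_le (hΩ0 x y) (hΩ x y) (hu0 x)) hu
  · refine summable_sq_abs_and_tsum_le_of_abs_le (fun y => ?_) hv
    simpa only [add_comm (v y)] using
      abs_mul_div_add_le (hΩ0 x y) ((hΩ x y).trans_eq (add_comm _ _)) (hv0 y)

theorem stmt_17_general {G : Type*} [Group G]
    (ω : G → ℝ) (hωpos : ∀ x, 0 < ω x)
    (u v : G → ℝ) (hu0 : ∀ x, 0 ≤ u x) (hv0 : ∀ y, 0 ≤ v y)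
    (hu : Summable fun x => u x ^ 2) (hv : Summable fun y => v y ^ 2)
    (hbound : ∀ x y, ω (x * y) / (ω x * ω y) ≤ u x + v y) :
    ∃ f₁ f₂ : G → G → ℝ,
      (∀ x y, ω (x * y) / (ω x * ω y) = f₁ x y + f₂ x y) ∧
      (∃ C₁ : ℝ, ∀ y, Summable (fun x => |f₁ x y| ^ 2) ∧ ∑' x, |f₁ x y| ^ 2 ≤ C₁) ∧
      (∃ C₂ : ℝ, ∀ x, Summable (fun y => |f₂ x y| ^ 2) ∧ ∑' y, |f₂ x y| ^ 2 ≤ C₂) := by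
  have hΩ0 : ∀ x y, 0 ≤ ω (x * y) / (ω x * ω y) := fun x y =>
    div_nonneg (hωpos _).le (mul_pos (hωpos x) (hωpos y)).le
  obtain ⟨f₁, f₂, hsum, h₁, h₂⟩ :=
    exists_decomposition_of_le_add _ u v hΩ0 hbound hu0 hv0 hu hv
  exact ⟨f₁, f₂, hsum, ⟨_, h₁⟩, ⟨_, h₂⟩⟩

theorem stmt_17 {G : Type*} [Group G]
    (ω : G → ℝ) (hωpos : ∀ x, 0 < ω x)
    (hω : ∀ x y, ω (x * y) ≤ ω x * ω y)
    (u v : G → ℝ) (hu0 : ∀ x, 0 ≤ u x) (hv0 : ∀ y, 0 ≤ v y)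
    (hu : Summable fun x => u x ^ 2) (hv : Summable fun y => v y ^ 2)
    (hbound : ∀ x y, ω (x * y) / (ω x * ω y) ≤ u x + v y) :
    ∃ f₁ f₂ : G → G → ℝ,
      (∀ x y, ω (x * y) / (ω x * ω y) = f₁ x y + f₂ x y) ∧
      (∃ C₁ : ℝ, ∀ y, Summable (fun x => |f₁ x y| ^ 2) ∧ ∑' x, |f₁ x y| ^ 2 ≤ C₁) ∧
      (∃ C₂ : ℝ, ∀ x, Summable (fun y => |f₂ x y| ^ 2) ∧ ∑' y, |f₂ x y| ^ 2 ≤ C₂) :=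
  stmt_17_general ω hωpos u v hu0 hv0 hu hv hbound
end
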